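/- arXiv:2009.09340 — 2 statements merged into one kernel-verified Lean document; each statement's English description precedes it below -/
import Mathlib

section
/- Let n, k be positive integers with 1 ≤ k < n and e = gcd(k, n), and suppose n/e is odd. Then Σ_{x ∈ F_q} χ1(u·x^{2^k+1}) = q = 2^n if u = 0, and Σ_{x ∈ F_q} χ1(u·x^{2^k+1}) = 0 for every u ∈ F_q^*. -/
/-!
For `n / gcd(k, n)` odd the Gold exponent `2^k + 1` is a permutation exponent of `𝔽_{2^n}`:
if `z^(2^k+1) = 1` then `z^(2^k) = z⁻¹`, so `z` is fixed by the `2k`-th and by the `n`-th power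
of Frobenius, hence by its `gcd(2k, n) = gcd(k, n)`-th power and so by its `k`-th power; thus
`z⁻¹ = z` and `z = 1` in characteristic `2`. Therefore `x ↦ u x^(2^k+1)` is a bijection for
`u ≠ 0`, and the sum becomes the full sum of the nontrivial character `(-1)^Tr`, which vanishes.
-/

/-- The absolute trace map `Tr : F → F_2`, viewed inside `F` (its values lie in `{0,1}`),
for a field `F` with `2^n` elements. -/
def absTr (n : ℕ) {F : Type*} [Field F] (x : F) : F :=
  ∑ i ∈ Finset.range n, x ^ (2 ^ i)

/-- The canonical additive character `χ1(x) = (−1)^{Tr(x)} ∈ ℤ`. -/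
def chi (n : ℕ) {F : Type*} [Field F] [DecidableEq F] (x : F) : ℤ :=
  if absTr n x = 0 then 1 else -1

open Function

theorem Nat.gcd_two_mul_of_odd_div_gcd {k n : ℕ} (h : Odd (n / k.gcd n)) :
    (2 * k).gcd n = k.gcd n := by
  obtain ⟨j, hj⟩ := k.gcd_dvd_left n
  obtain ⟨m, hm⟩ := k.gcd_dvd_right n
  set e := k.gcd n
  rcases Nat.eq_zero_or_pos e with he | he
  · simp [he] at h
  have hm_odd : Odd m := by rwa [hm, Nat.mul_div_cancel_left _ he] at h
  calc (2 * k).gcd n = (e * (2 * j)).gcd (e * m) := by rw [← hm, mul_left_comm, ← hj]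
    _ = e * j.gcd m := by
      rw [Nat.gcd_mul_left, Nat.Coprime.gcd_mul_left_cancel _ (Nat.coprime_two_left.mpr hm_odd)]
    _ = e := by rw [← Nat.gcd_mul_left, ← hj, ← hm]

section Gold

variable {F : Type*} [Field F] [CharP F 2] {n k : ℕ}

theorem eq_one_of_pow_two_pow_add_one_eq_one (hgcd : (2 * k).gcd n = k.gcd n) {z : F}
    (hzn : z ^ 2 ^ n = z) (hz : z ^ (2 ^ k + 1) = 1) : z = 1 := by
  have hinv : z ^ 2 ^ k = z⁻¹ := eq_inv_of_mul_eq_one_left (by rwa [← pow_succ])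
  have h2k : IsPeriodicPt (frobenius F 2) (2 * k) z := by
    rw [IsPeriodicPt, IsFixedPt, iterate_frobenius, two_mul, pow_add, pow_mul, hinv, inv_pow,
      hinv, inv_inv]
  have hn : IsPeriodicPt (frobenius F 2) n z := by
    rwa [IsPeriodicPt, IsFixedPt, iterate_frobenius]
  have hk : z ^ 2 ^ k = z := by
    have hgcd_period := h2k.gcd hn
    rw [hgcd] at hgcd_period
    simpa only [IsPeriodicPt, IsFixedPt, iterate_frobenius] using
      hgcd_period.trans_dvd (k.gcd_dvd_left n)
  refine CharTwo.sq_injective ?_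
  calc z ^ 2 = z ^ (2 ^ k + 1) := by rw [pow_succ z (2 ^ k), hk, sq]
    _ = 1 ^ 2 := by rw [hz, one_pow]

theorem pow_two_pow_add_one_injective (hgcd : (2 * k).gcd n = k.gcd n)
    (hF : ∀ z : F, z ^ 2 ^ n = z) : Injective fun x : F ↦ x ^ (2 ^ k + 1) := by
  intro x y (hxy : x ^ (2 ^ k + 1) = y ^ (2 ^ k + 1))
  rcases eq_or_ne y 0 with rfl | hy
  · exact pow_eq_zero_iff (by positivity) |>.mp (hxy.trans (zero_pow (by positivity)))
  · refine (div_eq_one_iff_eq hy).mp (eq_one_of_pow_two_pow_add_one_eq_one hgcd (hF _) ?_)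
    rw [div_pow, hxy, div_self (pow_ne_zero _ hy)]

theorem pow_two_pow_add_one_bijective [Fintype F] (hcard : Fintype.card F = 2 ^ n)
    (hodd : Odd (n / k.gcd n)) : Bijective fun x : F ↦ x ^ (2 ^ k + 1) :=
  Finite.injective_iff_bijective.mp <|
    pow_two_pow_add_one_injective (Nat.gcd_two_mul_of_odd_div_gcd hodd)
      fun z ↦ hcard ▸ FiniteField.pow_card z

end Gold

def signChar : AddChar (ZMod 2) ℤ where
  toFun a := if a = 0 then 1 else -1
  map_zero_eq_one' := rfl
  map_add_eq_mul' := by decide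

@[simp]
theorem signChar_apply (a : ZMod 2) : signChar a = if a = 0 then 1 else -1 := rfl

section TraceCharacter

variable (F : Type*) [Field F] [Fintype F] [Algebra (ZMod 2) F]

noncomputable def traceChar : AddChar F ℤ :=
  signChar.compAddMonoidHom (Algebra.trace (ZMod 2) F).toAddMonoidHom

theorem traceChar_ne_one : traceChar F ≠ 1 := by
  obtain ⟨x, hx⟩ := Algebra.trace_surjective (ZMod 2) F 1
  intro h
  have := DFunLike.congr_fun h x
  simp [traceChar, hx] at this

variable {F} {n : ℕ}

theorem absTr_eq_algebraMap_trace (hcard : Fintype.card F = 2 ^ n) (x : F) :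
    absTr n x = algebraMap (ZMod 2) F (Algebra.trace (ZMod 2) F x) := by
  have hfinrank : Module.finrank (ZMod 2) F = n := by
    rw [Module.card_eq_pow_finrank (K := ZMod 2), ZMod.card] at hcard
    exact Nat.pow_right_injective le_rfl hcard
  rw [FiniteField.algebraMap_trace_eq_sum_pow, hfinrank, Nat.card_zmod, absTr]

theorem chi_eq_traceChar [DecidableEq F] (hcard : Fintype.card F = 2 ^ n) (x : F) :
    chi n x = traceChar F x := by
  simp [chi, traceChar, absTr_eq_algebraMap_trace hcard]

end TraceCharacter

theorem weil_sum_gold_no_linear_term_odd_general (n k : ℕ)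
    {F : Type*} [Field F] [Fintype F] [DecidableEq F] [CharP F 2]
    (hcard : Fintype.card F = 2 ^ n)
    (hodd : Odd (n / Nat.gcd k n)) :
    (∑ x : F, chi n ((0 : F) * x ^ (2 ^ k + 1)) = 2 ^ n) ∧
    (∀ u : F, u ≠ 0 → ∑ x : F, chi n (u * x ^ (2 ^ k + 1)) = 0) := by
  let := ZMod.algebra F 2
  refine ⟨by simp [chi_eq_traceChar hcard, hcard], fun u hu ↦ ?_⟩
  have hbij : Bijective fun x : F ↦ u * x ^ (2 ^ k + 1) :=
    (mulLeft_bijective₀ u hu).comp (pow_two_pow_add_one_bijective hcard hodd)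
  rw [Fintype.sum_bijective _ hbij _ (chi n) fun _ ↦ rfl]
  simpa only [chi_eq_traceChar hcard] using AddChar.sum_eq_zero_of_ne_one (traceChar_ne_one F)

/-- If `n/e` is odd (`e = gcd(k,n)`), then `Σ_x χ1(u x^{2^k+1})` equals `2^n` for `u = 0`
and equals `0` for every nonzero `u`. -/
theorem weil_sum_gold_no_linear_term_odd (n k : ℕ) (hk1 : 1 ≤ k) (hkn : k < n)
    {F : Type*} [Field F] [Fintype F] [DecidableEq F] [CharP F 2]
    (hcard : Fintype.card F = 2 ^ n)
    (hodd : Odd (n / Nat.gcd k n)) :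
    (∑ x : F, chi n ((0 : F) * x ^ (2 ^ k + 1)) = 2 ^ n) ∧
    (∀ u : F, u ≠ 0 → ∑ x : F, chi n (u * x ^ (2 ^ k + 1)) = 0) :=
  weil_sum_gold_no_linear_term_odd_general n k hcard hodd
end

section
/- Let n, k be positive integers with 1 ≤ k < n. For all α, β ∈ F_q, Σ_{x ∈ F_q} χ1(α·x^{2^k+1} + β·(x+1)^{2^k+1}) = χ1(β) · S(α + β, β^{2^{n−k}} + β), where S(u, v) = Σ_{x ∈ F_q} χ1(u·x^{2^k+1} + v·x). -/
section CharTwo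

variable {F : Type*} [Field F] [CharP F 2]

lemma absTr_add (n : ℕ) (x y : F) : absTr n (x + y) = absTr n x + absTr n y := by
  simp only [absTr, add_pow_char_pow, Finset.sum_add_distrib]

lemma absTr_sq (n : ℕ) (x : F) : absTr n x ^ 2 = absTr n (x ^ 2) := by
  simp only [absTr, sum_pow_char, ← pow_mul, mul_comm]

lemma add_one_pow_two_pow_add_one (k : ℕ) (x : F) :
    (x + 1) ^ (2 ^ k + 1) = x ^ (2 ^ k + 1) + x ^ 2 ^ k + x + 1 := by
  rw [pow_succ, add_pow_char_pow, one_pow]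
  ring

end CharTwo

section FiniteField

variable {F : Type*} [Field F] [Fintype F] {n : ℕ}

lemma absTr_sq_of_card_eq (hcard : Fintype.card F = 2 ^ n) (x : F) :
    absTr n (x ^ 2) = absTr n x := by
  have hx : x ^ 2 ^ n = x := by rw [← hcard, FiniteField.pow_card]
  have hshift : absTr n (x ^ 2) + x = absTr n x + x ^ 2 ^ n := by
    simp only [absTr, ← pow_mul, ← pow_succ']
    rw [← Finset.sum_range_succ (fun i => x ^ 2 ^ i) n, Finset.sum_range_succ', pow_zero, pow_one]
  rw [hx] at hshift
  exact add_right_cancel hshift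

lemma absTr_pow_two_pow_of_card_eq (hcard : Fintype.card F = 2 ^ n) (m : ℕ) (x : F) :
    absTr n (x ^ 2 ^ m) = absTr n x := by
  induction m with
  | zero => rw [pow_zero, pow_one]
  | succ m ih => rw [pow_succ, pow_mul, absTr_sq_of_card_eq hcard, ih]

lemma absTr_mul_pow_two_pow {k : ℕ} (hk : k ≤ n) (hcard : Fintype.card F = 2 ^ n) (β x : F) :
    absTr n (β * x ^ 2 ^ k) = absTr n (β ^ 2 ^ (n - k) * x) := by
  have hx : x ^ 2 ^ n = x := by rw [← hcard, FiniteField.pow_card]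
  rw [← absTr_pow_two_pow_of_card_eq hcard (n - k), mul_pow, ← pow_mul, ← pow_add,
    Nat.add_sub_cancel' hk, hx]

variable [CharP F 2]

lemma absTr_eq_zero_or_eq_one (hcard : Fintype.card F = 2 ^ n) (x : F) :
    absTr n x = 0 ∨ absTr n x = 1 := by
  have hidem : absTr n x * absTr n x = absTr n x := by
    rw [← sq, absTr_sq, absTr_sq_of_card_eq hcard]
  exact (IsIdempotentElem.iff_eq_zero_or_one).mp hidem

lemma chi_add [DecidableEq F] (hcard : Fintype.card F = 2 ^ n) (x y : F) :
    chi n (x + y) = chi n x * chi n y := by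
  unfold chi
  rw [absTr_add]
  rcases absTr_eq_zero_or_eq_one hcard x with hx | hx <;>
    rcases absTr_eq_zero_or_eq_one hcard y with hy | hy <;>
    simp [hx, hy, CharTwo.add_self_eq_zero]

lemma chi_mul_add_one_pow_two_pow_add_one [DecidableEq F] {k : ℕ} (hk : k ≤ n)
    (hcard : Fintype.card F = 2 ^ n) (α β x : F) :
    chi n (α * x ^ (2 ^ k + 1) + β * (x + 1) ^ (2 ^ k + 1)) =
      chi n β * chi n ((α + β) * x ^ (2 ^ k + 1) + (β ^ 2 ^ (n - k) + β) * x) := by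
  have hsplit : α * x ^ (2 ^ k + 1) + β * (x + 1) ^ (2 ^ k + 1) =
      β + (β * x ^ 2 ^ k + ((α + β) * x ^ (2 ^ k + 1) + β * x)) := by
    rw [add_one_pow_two_pow_add_one]
    ring
  have hrest : absTr n (β * x ^ 2 ^ k + ((α + β) * x ^ (2 ^ k + 1) + β * x)) =
      absTr n ((α + β) * x ^ (2 ^ k + 1) + (β ^ 2 ^ (n - k) + β) * x) := by
    rw [absTr_add, absTr_mul_pow_two_pow hk hcard, ← absTr_add]
    ring_nf
  rw [hsplit, chi_add hcard]
  simp only [chi, hrest]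

end FiniteField

theorem gold_shifted_weil_sum_general (n k : ℕ) (hkn : k < n)
    {F : Type*} [Field F] [Fintype F] [DecidableEq F] [CharP F 2]
    (hcard : Fintype.card F = 2 ^ n) :
    ∀ α β : F,
      ∑ x : F, chi n (α * x ^ (2 ^ k + 1) + β * (x + 1) ^ (2 ^ k + 1)) =
        chi n β *
          ∑ x : F, chi n ((α + β) * x ^ (2 ^ k + 1) + (β ^ (2 ^ (n - k)) + β) * x) := by
  intro α β
  rw [Finset.mul_sum]
  exact Finset.sum_congr rfl fun x _ =>
    chi_mul_add_one_pow_two_pow_add_one hkn.le hcard α β x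

/-- For all `α, β` in the field `F` with `2^n` elements,
`Σ_x χ1(α x^{2^k+1} + β (x+1)^{2^k+1}) = χ1(β) · S(α+β, β^{2^{n−k}} + β)`,
where `S(u,v) = Σ_x χ1(u x^{2^k+1} + v x)`. -/
theorem gold_shifted_weil_sum (n k : ℕ) (hk1 : 1 ≤ k) (hkn : k < n)
    {F : Type*} [Field F] [Fintype F] [DecidableEq F] [CharP F 2]
    (hcard : Fintype.card F = 2 ^ n) :
    ∀ α β : F,
      ∑ x : F, chi n (α * x ^ (2 ^ k + 1) + β * (x + 1) ^ (2 ^ k + 1)) =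
        chi n β *
          ∑ x : F, chi n ((α + β) * x ^ (2 ^ k + 1) + (β ^ (2 ^ (n - k)) + β) * x) :=
  gold_shifted_weil_sum_general n k hkn hcard
end
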